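/- arXiv:math/0503065 — 2 statements merged into one kernel-verified Lean document; each statement's English description precedes it below -/
import Mathlib

section
/- There exists a constant C > 0 such that for all integers n ≥ 2 and all x ∈ ℤ² with 0 < |x| < n the following holds: let (S_m)_{m≥0} be simple random walk on ℤ² started at x, and let η be the smallest m > 0 such that S_m = (0,0) or |S_m| ≥ n. Then (log n − log|x| − C)/log n ≤ P(S_η = (0,0)) ≤ (log n − log|x| + C)/log n. -/
/-!
The probability `h(y)` that the walk started at `y` reaches the origin before leaving the ball
of radius `n` is, as a sum over the lattice paths realising it, harmonic in the punctured ball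
`0 < |y| < n`, equal to `1` at the origin and to `0` outside. With `T = log n²` and `s = |y|²`,
the functions `(T + 15 - log s - 4 / s) / T` and `(T - 12 - log s + 3 / s) / T` (set to `1` at the
origin) are super- resp. subharmonic there: for `s ≥ 2` this is `log x ≤ x - 1` applied to the
product of the four neighbouring squared norms, which equals `(s² - 1)² + 16 y₁² y₂²`. They
dominate resp. are dominated by `h` on the boundary, so the maximum principle squeezes `h`
between them; passing to `log₂` only rescales the constant.
-/

open MeasureTheory ProbabilityTheory

open scoped ENNReal

/-- The uniform step distribution on the four unit steps of `ℤ²`. -/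
noncomputable def stepDist : Measure (ℤ × ℤ) :=
  (4 : ENNReal)⁻¹ • (Measure.dirac (1, 0) + Measure.dirac (-1, 0) +
    Measure.dirac (0, 1) + Measure.dirac (0, -1))

/-- The Euclidean norm of a point of `ℤ²`. -/
noncomputable def znorm (x : ℤ × ℤ) : ℝ :=
  Real.sqrt ((x.1 : ℝ) ^ 2 + (x.2 : ℝ) ^ 2)

/-- The simple random walk started at `x`, after `n` steps. -/
def walkFrom {Ω : Type} (X : ℕ → Ω → ℤ × ℤ) (x : ℤ × ℤ) (n : ℕ) (ω : Ω) : ℤ × ℤ :=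
  x + ∑ i ∈ Finset.Icc 1 n, X i ω

/-- `η`: the smallest `m > 0` such that the walk started at `x` hits the origin
or leaves the open ball of radius `n` (and `0` if there is no such `m`). -/
noncomputable def hitTime {Ω : Type} (X : ℕ → Ω → ℤ × ℤ) (x : ℤ × ℤ) (n : ℕ) (ω : Ω) : ℕ :=
  sInf {m : ℕ | 0 < m ∧ (walkFrom X x m ω = 0 ∨ (n : ℝ) ≤ znorm (walkFrom X x m ω))}

def sqNorm (z : ℤ × ℤ) : ℤ := z.1 ^ 2 + z.2 ^ 2

def puncturedBall (n : ℕ) : Set (ℤ × ℤ) := {z | z ≠ 0 ∧ sqNorm z < (n : ℤ) ^ 2}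

instance (n : ℕ) : DecidablePred (· ∈ puncturedBall n) :=
  fun z => inferInstanceAs (Decidable (z ≠ 0 ∧ sqNorm z < (n : ℤ) ^ 2))

def unitSteps : Finset (ℤ × ℤ) := {(1, 0), (-1, 0), (0, 1), (0, -1)}

def nbrSum {M : Type*} [AddCommMonoid M] (f : ℤ × ℤ → M) (y : ℤ × ℤ) : M :=
  ∑ e ∈ unitSteps, f (y + e)

lemma nbrSum_eq {M : Type*} [AddCommMonoid M] (f : ℤ × ℤ → M) (y : ℤ × ℤ) :
    nbrSum f y = f (y + (1, 0)) + f (y + (-1, 0)) + f (y + (0, 1)) + f (y + (0, -1)) := by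
  simp [nbrSum, unitSteps, add_assoc]

lemma nbrSum_sub (f g : ℤ × ℤ → ℝ) (y : ℤ × ℤ) :
    nbrSum (fun z => f z - g z) y = nbrSum f y - nbrSum g y :=
  Finset.sum_sub_distrib _ _

lemma sqNorm_zero : sqNorm 0 = 0 := rfl

lemma sqNorm_nonneg (z : ℤ × ℤ) : 0 ≤ sqNorm z := by unfold sqNorm; positivity

lemma sqNorm_eq_zero {z : ℤ × ℤ} : sqNorm z = 0 ↔ z = 0 := by
  obtain ⟨a, b⟩ := z
  simp only [sqNorm, Prod.mk_eq_zero]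
  constructor
  · intro h; constructor <;> nlinarith [sq_nonneg a, sq_nonneg b]
  · rintro ⟨rfl, rfl⟩; ring

lemma one_le_sqNorm {z : ℤ × ℤ} (hz : z ≠ 0) : 1 ≤ sqNorm z :=
  (sqNorm_nonneg z).lt_of_ne (Ne.symm (mt sqNorm_eq_zero.1 hz))

lemma sqNorm_add (y e : ℤ × ℤ) :
    sqNorm (y + e) = sqNorm y + 2 * (y.1 * e.1 + y.2 * e.2) + sqNorm e := by
  simp only [sqNorm, Prod.fst_add, Prod.snd_add]; ring

lemma sqNorm_of_mem_unitSteps {e : ℤ × ℤ} (he : e ∈ unitSteps) : sqNorm e = 1 := by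
  simp only [unitSteps, Finset.mem_insert, Finset.mem_singleton] at he
  rcases he with rfl | rfl | rfl | rfl <;> rfl

lemma mem_unitSteps_of_sqNorm_eq_one {z : ℤ × ℤ} (hz : sqNorm z = 1) : z ∈ unitSteps := by
  obtain ⟨a, b⟩ := z
  simp only [sqNorm] at hz
  have ha : -1 ≤ a ∧ a ≤ 1 := by constructor <;> nlinarith [sq_nonneg b]
  have hb : -1 ≤ b ∧ b ≤ 1 := by constructor <;> nlinarith [sq_nonneg a]
  obtain ⟨ha, ha'⟩ := ha
  obtain ⟨hb, hb'⟩ := hb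
  interval_cases a <;> interval_cases b <;> simp_all [unitSteps]

lemma sqNorm_add_unitStep_pos {y e : ℤ × ℤ} (hy : 2 ≤ sqNorm y) (he : e ∈ unitSteps) :
    0 < sqNorm (y + e) := by
  refine one_le_sqNorm fun h => ?_
  rw [eq_neg_of_add_eq_zero_left h] at hy
  simp only [unitSteps, Finset.mem_insert, Finset.mem_singleton] at he
  rcases he with rfl | rfl | rfl | rfl <;> norm_num [sqNorm] at hy

lemma znorm_eq_sqrt (z : ℤ × ℤ) : znorm z = Real.sqrt (sqNorm z) := by
  simp [znorm, sqNorm]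

lemma znorm_pos_iff {z : ℤ × ℤ} : 0 < znorm z ↔ z ≠ 0 := by
  rw [znorm_eq_sqrt, Real.sqrt_pos, Int.cast_pos]
  exact ⟨fun h h0 => by simp [h0, sqNorm] at h, fun h => one_le_sqNorm h⟩

lemma znorm_lt_iff {z : ℤ × ℤ} {n : ℕ} : znorm z < n ↔ sqNorm z < (n : ℤ) ^ 2 := by
  rw [znorm_eq_sqrt, Real.sqrt_lt (by exact_mod_cast sqNorm_nonneg z) (by positivity)]
  exact_mod_cast Iff.rfl

lemma mem_puncturedBall_iff {n : ℕ} {z : ℤ × ℤ} :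
    z ∈ puncturedBall n ↔ 0 < znorm z ∧ znorm z < n := by
  rw [znorm_pos_iff, znorm_lt_iff]; rfl

lemma puncturedBall_finite (n : ℕ) : (puncturedBall n).Finite := by
  refine (Set.finite_Icc (-(n : ℤ), -(n : ℤ)) ((n : ℤ), (n : ℤ))).subset fun z hz => ?_
  have h := hz.2
  unfold sqNorm at h
  have h1 := abs_le_of_sq_le_sq' (by nlinarith [sq_nonneg z.2] : z.1 ^ 2 ≤ (n : ℤ) ^ 2)
    (by positivity)
  have h2 := abs_le_of_sq_le_sq' (by nlinarith [sq_nonneg z.1] : z.2 ^ 2 ≤ (n : ℤ) ^ 2)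
    (by positivity)
  exact ⟨⟨h1.1, h2.1⟩, ⟨h1.2, h2.2⟩⟩

/-- The `(1, 0)`-most maximiser of `u` on `D` has all four neighbours at the same height,
so it cannot lie in `D`. -/
theorem nonpos_of_subharmonic {D : Set (ℤ × ℤ)} (hD : D.Finite) {u : ℤ × ℤ → ℝ}
    (hsub : ∀ y ∈ D, 4 * u y ≤ nbrSum u y)
    (hbdry : ∀ y ∈ D, ∀ e ∈ unitSteps, y + e ∉ D → u (y + e) ≤ 0) {y : ℤ × ℤ} (hy : y ∈ D) :
    u y ≤ 0 := by
  by_contra! hpos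
  obtain ⟨z, hzD, hzmax⟩ := hD.toFinset.exists_max_image u ⟨y, hD.mem_toFinset.2 hy⟩
  obtain ⟨w, hw, hwmax⟩ := (hD.toFinset.filter (u · = u z)).exists_max_image Prod.fst
    ⟨z, Finset.mem_filter.2 ⟨hzD, rfl⟩⟩
  obtain ⟨hwD, hwz⟩ := Finset.mem_filter.1 hw
  rw [Set.Finite.mem_toFinset] at hzD hwD
  have hM : 0 < u z := hpos.trans_le (hzmax y (hD.mem_toFinset.2 hy))
  have hnbr : ∀ e ∈ unitSteps, u (w + e) ≤ u z := fun e he => by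
    by_cases h : w + e ∈ D
    · exact hzmax _ (hD.mem_toFinset.2 h)
    · exact (hbdry w hwD e he h).trans hM.le
  have hsum := hsub w hwD
  rw [nbrSum_eq] at hsum
  have hright : u (w + (1, 0)) = u z := by
    linarith [hnbr (1, 0) (by decide), hnbr (-1, 0) (by decide), hnbr (0, 1) (by decide),
      hnbr (0, -1) (by decide)]
  have hin : w + (1, 0) ∈ D := by
    by_contra h
    linarith [hbdry w hwD (1, 0) (by decide) h]
  have := hwmax (w + (1, 0)) (Finset.mem_filter.2 ⟨hD.mem_toFinset.2 hin, hright⟩)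
  simp at this

section Walk

variable {Ω : Type}

def stepVec (X : ℕ → Ω → ℤ × ℤ) (m : ℕ) (ω : Ω) : Fin m → ℤ × ℤ := fun i => X (i + 1) ω

def ExitsAtOrigin (n : ℕ) : (m : ℕ) → ℤ × ℤ → (Fin m → ℤ × ℤ) → Prop
  | 0, y, _ => y = 0
  | m + 1, y, a => y ∈ puncturedBall n ∧ ExitsAtOrigin n m (y + a 0) (Fin.tail a)

lemma walkFrom_zero (X : ℕ → Ω → ℤ × ℤ) (y : ℤ × ℤ) (ω : Ω) : walkFrom X y 0 ω = y := by
  simp [walkFrom]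

lemma walkFrom_succ (X : ℕ → Ω → ℤ × ℤ) (y : ℤ × ℤ) (k : ℕ) (ω : Ω) :
    walkFrom X y (k + 1) ω = walkFrom (fun i => X (i + 1)) (y + X 1 ω) k ω := by
  induction k with
  | zero => simp [walkFrom]
  | succ k ih =>
    simp only [walkFrom] at ih ⊢
    rw [Finset.sum_Icc_succ_top (b := k + 1) (by omega), ← add_assoc, ih,
      Finset.sum_Icc_succ_top (b := k) (by omega), add_assoc]

lemma exitsAtOrigin_stepVec_iff (n m : ℕ) (X : ℕ → Ω → ℤ × ℤ) (y : ℤ × ℤ) (ω : Ω) :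
    ExitsAtOrigin n m y (stepVec X m ω) ↔
      (∀ k < m, walkFrom X y k ω ∈ puncturedBall n) ∧ walkFrom X y m ω = 0 := by
  induction m generalizing X y with
  | zero => simp [ExitsAtOrigin, walkFrom_zero]
  | succ m ih =>
    rw [Nat.forall_lt_succ_left, walkFrom_zero, walkFrom_succ, and_assoc]
    simp only [walkFrom_succ]
    exact and_congr_right fun _ => ih (fun i => X (i + 1)) (y + X 1 ω)

lemma mem_setOf_walkFrom_hitTime_iff {X : ℕ → Ω → ℤ × ℤ} {n : ℕ} {y : ℤ × ℤ}
    (hy : y ∈ puncturedBall n) (ω : Ω) :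
    walkFrom X y (hitTime X y n ω) ω = 0 ↔
      ∃ m, (∀ k < m, walkFrom X y k ω ∈ puncturedBall n) ∧ walkFrom X y m ω = 0 := by
  set S := {m : ℕ | 0 < m ∧ (walkFrom X y m ω = 0 ∨ (n : ℝ) ≤ znorm (walkFrom X y m ω))}
  have hstop : ∀ k, 0 < k → (k ∈ S ↔ walkFrom X y k ω ∉ puncturedBall n) := fun k hk => by
    simp [S, hk, mem_puncturedBall_iff, znorm_pos_iff, or_iff_not_imp_left]
  constructor
  · intro h
    have hS : S.Nonempty := by
      by_contra hS
      rw [Set.not_nonempty_iff_eq_empty] at hS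
      rw [show hitTime X y n ω = 0 by simp [hitTime, S, hS], walkFrom_zero] at h
      exact hy.1 h
    refine ⟨hitTime X y n ω, fun k hk => ?_, h⟩
    rcases k.eq_zero_or_pos with rfl | hk0
    · rwa [walkFrom_zero]
    · exact not_not.1 ((hstop k hk0).not.1 (Nat.notMem_of_lt_sInf hk))
  · rintro ⟨m, hball, hm⟩
    have hm0 : 0 < m := Nat.pos_of_ne_zero fun h0 => hy.1 (by rwa [h0, walkFrom_zero] at hm)
    have hmS : m ∈ S := ⟨hm0, Or.inl hm⟩
    have hle : hitTime X y n ω ≤ m := Nat.sInf_le hmS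
    have htS : hitTime X y n ω ∈ S := Nat.sInf_mem ⟨m, hmS⟩
    obtain rfl : hitTime X y n ω = m := hle.antisymm <| not_lt.1 fun hlt =>
      (hstop _ htS.1).1 htS (hball _ hlt)
    exact hm

end Walk

noncomputable def exitPathProb (n m : ℕ) (y : ℤ × ℤ) : ℝ≥0∞ :=
  Measure.pi (fun _ : Fin m => stepDist) {a | ExitsAtOrigin n m y a}

noncomputable def hitProb (n : ℕ) (y : ℤ × ℤ) : ℝ≥0∞ := ∑' m, exitPathProb n m y

lemma lintegral_stepDist (g : ℤ × ℤ → ℝ≥0∞) :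
    ∫⁻ e, g e ∂stepDist = 4⁻¹ * ∑ e ∈ unitSteps, g e := by
  simp [stepDist, lintegral_add_measure, unitSteps, add_assoc, mul_add]

instance : IsProbabilityMeasure stepDist :=
  ⟨by simpa [unitSteps, ENNReal.inv_mul_cancel] using lintegral_stepDist 1⟩

lemma exitPathProb_zero (n : ℕ) (y : ℤ × ℤ) :
    exitPathProb n 0 y = if y = 0 then 1 else 0 := by
  split_ifs with h <;> simp [exitPathProb, ExitsAtOrigin, h]

lemma exitPathProb_succ (n m : ℕ) (y : ℤ × ℤ) :
    exitPathProb n (m + 1) y =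
      if y ∈ puncturedBall n then ∫⁻ e, exitPathProb n m (y + e) ∂stepDist else 0 := by
  split_ifs with hy
  · have h := measurePreserving_piFinSuccAbove (fun _ : Fin (m + 1) => stepDist) 0
    have hset : {a | ExitsAtOrigin n (m + 1) y a} =
        MeasurableEquiv.piFinSuccAbove (fun _ => ℤ × ℤ) 0 ⁻¹'
          {p | ExitsAtOrigin n m (y + p.1) p.2} := by
      ext a; simp [ExitsAtOrigin, hy]
    rw [exitPathProb, hset, h.measure_preimage MeasurableSet.of_discrete.nullMeasurableSet,
      Measure.prod_apply MeasurableSet.of_discrete]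
    rfl
  · simp [exitPathProb, ExitsAtOrigin, hy]

lemma hitProb_eq (n : ℕ) (y : ℤ × ℤ) :
    hitProb n y = (if y = 0 then 1 else 0) +
      if y ∈ puncturedBall n then 4⁻¹ * nbrSum (hitProb n) y else 0 := by
  have hsucc : ∑' m, exitPathProb n (m + 1) y =
      if y ∈ puncturedBall n then ∫⁻ e, hitProb n (y + e) ∂stepDist else 0 := by
    simp_rw [exitPathProb_succ]
    split_ifs
    · exact (lintegral_tsum fun _ => Measurable.of_discrete.aemeasurable).symm
    · exact tsum_zero
  change ∑' m, exitPathProb n m y = _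
  rw [tsum_eq_zero_add' ENNReal.summable, exitPathProb_zero, hsucc, lintegral_stepDist]
  rfl

lemma zero_notMem_puncturedBall (n : ℕ) : (0 : ℤ × ℤ) ∉ puncturedBall n := fun h => h.1 rfl

lemma hitProb_zero (n : ℕ) : hitProb n 0 = 1 := by
  simp [hitProb_eq n 0, zero_notMem_puncturedBall]

lemma hitProb_of_notMem {n : ℕ} {z : ℤ × ℤ} (h0 : z ≠ 0) (hz : z ∉ puncturedBall n) :
    hitProb n z = 0 := by
  simp [hitProb_eq n z, h0, hz]

lemma hitProb_of_mem {n : ℕ} {z : ℤ × ℤ} (hz : z ∈ puncturedBall n) :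
    hitProb n z = 4⁻¹ * nbrSum (hitProb n) z := by
  simp [hitProb_eq n z, hz.1, hz]

section Identification

variable {Ω : Type} [MeasurableSpace Ω] {μ : Measure Ω} {X : ℕ → Ω → ℤ × ℤ}

lemma measurable_stepVec (hX : ∀ i, Measurable (X i)) (m : ℕ) : Measurable (stepVec X m) :=
  measurable_pi_lambda _ fun _ => hX _

lemma map_stepVec (hX : ∀ i, Measurable (X i)) (hmap : ∀ i, μ.map (X i) = stepDist)
    (hind : iIndepFun X μ) (m : ℕ) :
    μ.map (stepVec X m) = Measure.pi (fun _ : Fin m => stepDist) := by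
  have hinj : Function.Injective fun i : Fin m => (i : ℕ) + 1 := fun i j h => by
    simpa [Fin.ext_iff] using h
  have h := (hind.precomp hinj).map_fun_eq_pi_map fun i => (hX _).aemeasurable
  simp only [hmap] at h
  exact h

lemma measure_exitsAtOrigin (hX : ∀ i, Measurable (X i)) (hmap : ∀ i, μ.map (X i) = stepDist)
    (hind : iIndepFun X μ) (n m : ℕ) (y : ℤ × ℤ) :
    μ {ω | ExitsAtOrigin n m y (stepVec X m ω)} = exitPathProb n m y := by
  rw [exitPathProb, ← map_stepVec hX hmap hind,
    Measure.map_apply (measurable_stepVec hX m) MeasurableSet.of_discrete]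
  rfl

theorem measure_hit_eq_hitProb (hX : ∀ i, Measurable (X i))
    (hmap : ∀ i, μ.map (X i) = stepDist) (hind : iIndepFun X μ) {n : ℕ} {y : ℤ × ℤ}
    (hy : y ∈ puncturedBall n) :
    μ {ω | walkFrom X y (hitTime X y n ω) ω = 0} = hitProb n y := by
  have hU : {ω | walkFrom X y (hitTime X y n ω) ω = 0} =
      ⋃ m, {ω | ExitsAtOrigin n m y (stepVec X m ω)} := by
    ext ω
    simp [mem_setOf_walkFrom_hitTime_iff hy, exitsAtOrigin_stepVec_iff]
  have hdisj : ∀ m m', m < m' → ∀ ω, ExitsAtOrigin n m y (stepVec X m ω) →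
      ¬ ExitsAtOrigin n m' y (stepVec X m' ω) := fun m m' hlt ω h h' => by
    rw [exitsAtOrigin_stepVec_iff] at h h'
    exact (h'.1 m hlt).1 h.2
  rw [hU, measure_iUnion]
  · exact tsum_congr fun m => measure_exitsAtOrigin hX hmap hind n m y
  · exact fun m m' hne => Set.disjoint_left.2 fun ω h h' =>
      hne.lt_or_gt.elim (hdisj _ _ · ω h h') (hdisj _ _ · ω h' h)
  · exact fun m => measurable_stepVec hX m MeasurableSet.of_discrete

lemma hitProb_le_one [IsProbabilityMeasure μ] (hX : ∀ i, Measurable (X i))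
    (hmap : ∀ i, μ.map (X i) = stepDist) (hind : iIndepFun X μ) (n : ℕ) (z : ℤ × ℤ) :
    hitProb n z ≤ 1 := by
  by_cases hz : z ∈ puncturedBall n
  · rw [← measure_hit_eq_hitProb hX hmap hind hz]
    exact prob_le_one
  · by_cases h0 : z = 0
    · rw [h0, hitProb_zero]
    · rw [hitProb_of_notMem h0 hz]
      exact zero_le_one

end Identification

noncomputable def logPot (k s : ℝ) : ℝ := Real.log s + k / s

noncomputable def barrier (T c k s : ℝ) : ℝ := if s = 0 then 1 else (T + c - logPot k s) / T

lemma nbrSum_comp_sqNorm (φ : ℝ → ℝ) (y : ℤ × ℤ) :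
    nbrSum (fun z => φ (sqNorm z)) y =
      φ (sqNorm y + 2 * y.1 + 1) + φ (sqNorm y - 2 * y.1 + 1) +
        φ (sqNorm y + 2 * y.2 + 1) + φ (sqNorm y - 2 * y.2 + 1) := by
  simp only [nbrSum_eq, sqNorm_add]
  push_cast [sqNorm]
  ring_nf

lemma nbrSum_comp_sqNorm_of_sqNorm_eq_one (φ : ℝ → ℝ) {y : ℤ × ℤ} (hy : sqNorm y = 1) :
    nbrSum (fun z => φ (sqNorm z)) y = φ 0 + φ 4 + 2 * φ 2 := by
  have := mem_unitSteps_of_sqNorm_eq_one hy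
  simp only [unitSteps, Finset.mem_insert, Finset.mem_singleton] at this
  rw [nbrSum_comp_sqNorm, hy]
  rcases this with rfl | rfl | rfl | rfl <;> norm_num <;> ring

lemma sum_logPot_eq (k : ℝ) {a b c d : ℝ} (ha : 0 < a) (hb : 0 < b) (hc : 0 < c)
    (hd : 0 < d) :
    logPot k a + logPot k b + logPot k c + logPot k d =
      Real.log (a * b * c * d) + k * (b * c * d + a * c * d + a * b * d + a * b * c) /
        (a * b * c * d) := by
  simp only [logPot]
  rw [Real.log_mul (by positivity) hd.ne', Real.log_mul (by positivity) hc.ne',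
    Real.log_mul ha.ne' hb.ne']
  field_simp
  ring

/-- The product of the squared norms of the four neighbours of `y`. -/
noncomputable def nbrNormProd (y : ℤ × ℤ) : ℝ :=
  ((sqNorm y : ℝ) ^ 2 - 1) ^ 2 + 16 * ((y.1 : ℝ) * y.2) ^ 2

lemma nbrNormProd_bounds (y : ℤ × ℤ) :
    ((sqNorm y : ℝ) ^ 2 - 1) ^ 2 ≤ nbrNormProd y ∧
      nbrNormProd y ≤ ((sqNorm y : ℝ) ^ 2 + 1) ^ 2 := by
  unfold nbrNormProd
  push_cast [sqNorm]
  constructor <;>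
    nlinarith [sq_nonneg ((y.1 : ℝ) * y.2), sq_nonneg ((y.1 : ℝ) ^ 2 - (y.2 : ℝ) ^ 2)]

lemma nbrSum_logPot {y : ℤ × ℤ} (hy : 2 ≤ sqNorm y) (k : ℝ) :
    nbrSum (fun z => logPot k (sqNorm z)) y =
      Real.log (nbrNormProd y) +
        k * (4 * (sqNorm y + 1) * (sqNorm y ^ 2 + 1)) / nbrNormProd y := by
  have hpos : ∀ e ∈ unitSteps, (0 : ℝ) < sqNorm y + 2 * (y.1 * e.1 + y.2 * e.2) + 1 :=
    fun e he => by
      have h := sqNorm_add_unitStep_pos hy he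
      rw [sqNorm_add, sqNorm_of_mem_unitSteps he] at h
      exact_mod_cast h
  have h1 := hpos (1, 0) (by decide)
  have h2 := hpos (-1, 0) (by decide)
  have h3 := hpos (0, 1) (by decide)
  have h4 := hpos (0, -1) (by decide)
  norm_num at h1 h2 h3 h4
  rw [nbrSum_comp_sqNorm, sum_logPot_eq k h1 (by linarith) h3 (by linarith), nbrNormProd]
  push_cast [sqNorm]
  ring_nf

lemma four_mul_logPot_four_le {s N : ℝ} (hs : 2 ≤ s) (hN : (s ^ 2 - 1) ^ 2 ≤ N)
    (hN' : N ≤ (s ^ 2 + 1) ^ 2) :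
    4 * logPot 4 s ≤ Real.log N + 4 * (4 * (s + 1) * (s ^ 2 + 1)) / N := by
  have hs0 : 0 < s := by linarith
  have hN0 : 0 < N := lt_of_lt_of_le (pow_pos (by nlinarith) 2) hN
  have hlog : 4 * Real.log s + 1 - s ^ 4 / N ≤ Real.log N := by
    have h := Real.log_le_sub_one_of_pos (show 0 < s ^ 4 / N by positivity)
    rw [Real.log_div (by positivity) hN0.ne', Real.log_pow] at h
    push_cast at h
    linarith
  have hpoly : 16 * N ≤ s * N - s ^ 5 + 16 * s * (s + 1) * (s ^ 2 + 1) := by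
    rcases le_total s 16 with h | h
    · nlinarith [mul_le_mul_of_nonneg_left hN' (sub_nonneg.2 h)]
    · nlinarith [mul_le_mul_of_nonneg_left hN (sub_nonneg.2 h)]
  have hrat : 16 / s ≤ 1 - s ^ 4 / N + 4 * (4 * (s + 1) * (s ^ 2 + 1)) / N := by
    rw [← sub_nonneg]
    have : 1 - s ^ 4 / N + 4 * (4 * (s + 1) * (s ^ 2 + 1)) / N - 16 / s =
        (s * N - s ^ 5 + 16 * s * (s + 1) * (s ^ 2 + 1) - 16 * N) / (s * N) := by
      field_simp
      ring
    rw [this]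
    exact div_nonneg (by linarith) (by positivity)
  have h16 : 4 * logPot 4 s = 4 * Real.log s + 16 / s := by simp only [logPot]; ring
  linarith

lemma log_add_le_four_mul_logPot_neg_three {s N : ℝ} (hs : 2 ≤ s) (hN : (s ^ 2 - 1) ^ 2 ≤ N)
    (hN' : N ≤ (s ^ 2 + 1) ^ 2) :
    Real.log N + -3 * (4 * (s + 1) * (s ^ 2 + 1)) / N ≤ 4 * logPot (-3) s := by
  have hs0 : 0 < s := by linarith
  have hN0 : 0 < N := lt_of_lt_of_le (pow_pos (by nlinarith) 2) hN
  have hlog : Real.log N - 4 * Real.log s ≤ N / s ^ 4 - 1 := by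
    have h := Real.log_le_sub_one_of_pos (show 0 < N / s ^ 4 by positivity)
    rw [Real.log_div hN0.ne' (by positivity), Real.log_pow] at h
    push_cast at h
    linarith
  -- `N ↦ N ^ 2 + (12 s ^ 3 - s ^ 4) N` is convex, and at `N = (s ^ 2 + 1) ^ 2` the bound holds
  have hpoly : N ^ 2 + 12 * s ^ 3 * N - s ^ 4 * N ≤ 12 * s ^ 4 * (s + 1) * (s ^ 2 + 1) := by
    have h1 : 0 ≤ ((s ^ 2 + 1) ^ 2 - N) * (N + (s ^ 2 + 1) ^ 2 + 12 * s ^ 3 - s ^ 4) :=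
      mul_nonneg (by linarith) (by nlinarith [pow_pos hs0 3])
    have h2 : 0 ≤ (s ^ 2 + 1) * (10 * s ^ 4 - 12 * s ^ 3 - 3 * s ^ 2 - 1) :=
      mul_nonneg (by positivity) (by nlinarith [pow_pos hs0 3, sq_nonneg (s - 2)])
    nlinarith
  have hrat : N / s ^ 4 - 1 ≤ 3 * (4 * (s + 1) * (s ^ 2 + 1)) / N - 12 / s := by
    rw [← sub_nonneg]
    have : 3 * (4 * (s + 1) * (s ^ 2 + 1)) / N - 12 / s - (N / s ^ 4 - 1) =
        (12 * s ^ 4 * (s + 1) * (s ^ 2 + 1) - (N ^ 2 + 12 * s ^ 3 * N - s ^ 4 * N)) /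
          (s ^ 4 * N) := by
      field_simp
      ring
    rw [this]
    exact div_nonneg (by linarith) (by positivity)
  have h12 : 4 * logPot (-3) s = 4 * Real.log s - 12 / s := by simp only [logPot]; ring
  have h3 : -3 * (4 * (s + 1) * (s ^ 2 + 1)) / N = -(3 * (4 * (s + 1) * (s ^ 2 + 1)) / N) := by
    ring
  linarith

lemma barrier_zero (T c k : ℝ) : barrier T c k 0 = 1 := if_pos rfl

lemma barrier_of_ne_zero (T c k : ℝ) {s : ℝ} (hs : s ≠ 0) :
    barrier T c k s = (T + c - logPot k s) / T := if_neg hs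

lemma nbrSum_barrier_of_two_le (T c k : ℝ) {y : ℤ × ℤ} (hy : 2 ≤ sqNorm y) :
    nbrSum (fun z => barrier T c k (sqNorm z)) y =
      (4 * (T + c) - nbrSum (fun z => logPot k (sqNorm z)) y) / T := by
  have hne : ∀ e ∈ unitSteps, ((sqNorm (y + e) : ℤ) : ℝ) ≠ 0 := fun e he => by
    exact_mod_cast (sqNorm_add_unitStep_pos hy he).ne'
  rw [nbrSum_eq, nbrSum_eq, barrier_of_ne_zero _ _ _ (hne _ (by decide)),
    barrier_of_ne_zero _ _ _ (hne _ (by decide)), barrier_of_ne_zero _ _ _ (hne _ (by decide)),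
    barrier_of_ne_zero _ _ _ (hne _ (by decide))]
  ring

lemma nbrSum_barrier_le_four_mul {T : ℝ} (hT : 0 < T) {y : ℤ × ℤ} (hy : y ≠ 0) :
    nbrSum (fun z => barrier T 15 4 (sqNorm z)) y ≤ 4 * barrier T 15 4 (sqNorm y) := by
  rcases (one_le_sqNorm hy).eq_or_lt with h1 | h2
  · rw [nbrSum_comp_sqNorm_of_sqNorm_eq_one _ h1.symm, ← h1]
    simp only [barrier, logPot]
    norm_num
    rw [show (4 : ℝ) = 2 ^ 2 by norm_num, Real.log_pow]
    field_simp
    push_cast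
    linarith [Real.log_pos one_lt_two]
  · have h2 : 2 ≤ sqNorm y := h2
    have hs : (2 : ℝ) ≤ sqNorm y := by exact_mod_cast h2
    rw [nbrSum_barrier_of_two_le _ _ _ h2, nbrSum_logPot h2,
      barrier_of_ne_zero _ _ _ (by positivity), ← mul_div_assoc]
    obtain ⟨hN, hN'⟩ := nbrNormProd_bounds y
    have := four_mul_logPot_four_le hs hN hN'
    exact div_le_div_of_nonneg_right (by linarith) hT.le

lemma four_mul_barrier_le_nbrSum {T : ℝ} (hT : 0 < T) {y : ℤ × ℤ} (hy : y ≠ 0) :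
    4 * barrier T (-12) (-3) (sqNorm y) ≤
      nbrSum (fun z => barrier T (-12) (-3) (sqNorm z)) y := by
  rcases (one_le_sqNorm hy).eq_or_lt with h1 | h2
  · rw [nbrSum_comp_sqNorm_of_sqNorm_eq_one _ h1.symm, ← h1]
    simp only [barrier, logPot]
    norm_num
    rw [show (4 : ℝ) = 2 ^ 2 by norm_num, Real.log_pow]
    field_simp
    push_cast
    linarith [Real.log_two_lt_d9]
  · have h2 : 2 ≤ sqNorm y := h2
    have hs : (2 : ℝ) ≤ sqNorm y := by exact_mod_cast h2
    rw [nbrSum_barrier_of_two_le _ _ _ h2, nbrSum_logPot h2,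
      barrier_of_ne_zero _ _ _ (by positivity), ← mul_div_assoc]
    obtain ⟨hN, hN'⟩ := nbrNormProd_bounds y
    have := log_add_le_four_mul_logPot_neg_three hs hN hN'
    exact div_le_div_of_nonneg_right (by linarith) hT.le

lemma barrier_nonpos_of_le_log {T s : ℝ} (hT : 0 < T) (hs : 1 ≤ s) (hTs : T ≤ Real.log s) :
    barrier T (-12) (-3) s ≤ 0 := by
  rw [barrier_of_ne_zero _ _ _ (by positivity), logPot, neg_div]
  refine div_nonpos_of_nonpos_of_nonneg ?_ hT.le
  have : 3 / s ≤ 3 := div_le_self (by norm_num) hs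
  linarith

lemma barrier_nonneg_of_log_le {T s : ℝ} (hT : 0 < T) (hs : 1 ≤ s) (hsT : Real.log s ≤ T + 1) :
    0 ≤ barrier T 15 4 s := by
  rw [barrier_of_ne_zero _ _ _ (by positivity), logPot]
  refine div_nonneg ?_ hT.le
  have : 4 / s ≤ 4 := div_le_self (by norm_num) hs
  linarith

lemma sqNorm_add_unitStep_le {n : ℕ} {y e : ℤ × ℤ} (hy : y ∈ puncturedBall n)
    (he : e ∈ unitSteps) : sqNorm (y + e) ≤ 2 * (n : ℤ) ^ 2 := by
  have hs := hy.2
  have he1 := sqNorm_of_mem_unitSteps he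
  rw [sqNorm_add, he1]
  unfold sqNorm at hs he1 ⊢
  nlinarith [sq_nonneg (y.1 - e.1), sq_nonneg (y.2 - e.2)]

lemma log_sqNorm_bounds {n : ℕ} (hn : 0 < n) {z : ℤ × ℤ} (h1 : (n : ℤ) ^ 2 ≤ sqNorm z)
    (h2 : sqNorm z ≤ 2 * (n : ℤ) ^ 2) :
    2 * Real.log n ≤ Real.log (sqNorm z) ∧ Real.log (sqNorm z) ≤ 2 * Real.log n + 1 := by
  have hn' : (0 : ℝ) < n := by exact_mod_cast hn
  have h1' : (n : ℝ) ^ 2 ≤ sqNorm z := by exact_mod_cast h1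
  have h2' : (sqNorm z : ℝ) ≤ 2 * (n : ℝ) ^ 2 := by exact_mod_cast h2
  have hlog : Real.log ((n : ℝ) ^ 2) = 2 * Real.log n := by simp [Real.log_pow]
  constructor
  · rw [← hlog]
    exact Real.log_le_log (by positivity) h1'
  · calc Real.log (sqNorm z) ≤ Real.log (2 * (n : ℝ) ^ 2) :=
        Real.log_le_log ((pow_pos hn' 2).trans_le h1') h2'
      _ = Real.log 2 + 2 * Real.log n := by
        rw [Real.log_mul (by norm_num) (by positivity), hlog]
      _ ≤ 2 * Real.log n + 1 := by linarith [Real.log_two_lt_d9]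

theorem hitProb_between_barriers {n : ℕ} (hn : 2 ≤ n) (hle : ∀ z, hitProb n z ≤ 1)
    {x : ℤ × ℤ} (hx : x ∈ puncturedBall n) :
    barrier (2 * Real.log n) (-12) (-3) (sqNorm x) ≤ (hitProb n x).toReal ∧
      (hitProb n x).toReal ≤ barrier (2 * Real.log n) 15 4 (sqNorm x) := by
  set T := 2 * Real.log n
  have hT : 0 < T := mul_pos two_pos (Real.log_pos (by exact_mod_cast hn))
  set F : ℤ × ℤ → ℝ := fun z => (hitProb n z).toReal
  have hharm : ∀ y ∈ puncturedBall n, 4 * F y = nbrSum F y := fun y hy => by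
    have hfin : ∀ e ∈ unitSteps, hitProb n (y + e) ≠ ∞ := fun e _ =>
      ((hle _).trans_lt ENNReal.one_lt_top).ne
    simp only [F]
    rw [hitProb_of_mem hy, ENNReal.toReal_mul, nbrSum, ENNReal.toReal_sum hfin, ← mul_assoc]
    norm_num
    rfl
  have hF0 : F 0 = 1 := by simp [F, hitProb_zero]
  have hext : ∀ y ∈ puncturedBall n, ∀ e ∈ unitSteps, y + e ∉ puncturedBall n → y + e ≠ 0 →
      F (y + e) = 0 ∧ 1 ≤ (sqNorm (y + e) : ℝ) ∧ T ≤ Real.log (sqNorm (y + e)) ∧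
        Real.log (sqNorm (y + e)) ≤ T + 1 := fun y hy e he hout h0 => by
    have hn2 : (n : ℤ) ^ 2 ≤ sqNorm (y + e) := not_lt.1 fun h => hout ⟨h0, h⟩
    refine ⟨by simp [F, hitProb_of_notMem h0 hout], by exact_mod_cast one_le_sqNorm h0,
      log_sqNorm_bounds (by omega) hn2 (sqNorm_add_unitStep_le hy he)⟩
  constructor
  · refine sub_nonpos.1 (nonpos_of_subharmonic
      (u := fun z => barrier T (-12) (-3) (sqNorm z) - F z)
      (puncturedBall_finite n) (fun y hy => ?_) (fun y hy e he hout => ?_) hx)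
    · rw [nbrSum_sub, mul_sub, ← hharm y hy]
      linarith [four_mul_barrier_le_nbrSum hT hy.1]
    · by_cases h0 : y + e = 0
      · rw [h0, sqNorm_zero, Int.cast_zero, barrier_zero, hF0, sub_self]
      · obtain ⟨hF, hs, hTs, -⟩ := hext y hy e he hout h0
        simp only [hF, sub_zero]
        exact barrier_nonpos_of_le_log hT hs hTs
  · refine sub_nonpos.1 (nonpos_of_subharmonic
      (u := fun z => F z - barrier T 15 4 (sqNorm z))
      (puncturedBall_finite n) (fun y hy => ?_) (fun y hy e he hout => ?_) hx)
    · rw [nbrSum_sub, mul_sub, ← hharm y hy]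
      linarith [nbrSum_barrier_le_four_mul hT hy.1]
    · by_cases h0 : y + e = 0
      · rw [h0, sqNorm_zero, Int.cast_zero, barrier_zero, hF0, sub_self]
      · obtain ⟨hF, hs, -, hsT⟩ := hext y hy e he hout h0
        simp only [hF, zero_sub, neg_nonpos]
        exact barrier_nonneg_of_log_le hT hs hsT

lemma logb_ratio_eq {n : ℕ} (hn : 2 ≤ n) (x : ℤ × ℤ) (t : ℝ) :
    (Real.logb 2 n - Real.logb 2 (znorm x) + t) / Real.logb 2 n =
      (2 * Real.log n - Real.log (sqNorm x) + 2 * t * Real.log 2) / (2 * Real.log n) := by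
  have hL : Real.log n ≠ 0 := (Real.log_pos (by exact_mod_cast hn)).ne'
  have h2 : Real.log 2 ≠ 0 := (Real.log_pos one_lt_two).ne'
  rw [Real.logb, Real.logb, znorm_eq_sqrt, Real.log_sqrt (by exact_mod_cast sqNorm_nonneg x)]
  field_simp

/-- There is a constant `C > 0` such that for all integers `n ≥ 2` and all `x ∈ ℤ²` with
`0 < |x| < n`: for simple random walk on `ℤ²` started at `x`, letting `η` be the smallest
`m > 0` with `S_m = 0` or `|S_m| ≥ n`, one has
`(log n − log|x| − C)/log n ≤ P(S_η = 0) ≤ (log n − log|x| + C)/log n`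
(`log` is base `2`). -/
theorem stmt2 :
    ∃ C : ℝ, 0 < C ∧
      ∀ (Ω : Type) [MeasurableSpace Ω] (μ : Measure Ω) [IsProbabilityMeasure μ]
        (X : ℕ → Ω → ℤ × ℤ),
        (∀ i, Measurable (X i)) →
        (∀ i, μ.map (X i) = stepDist) →
        iIndepFun X μ →
        ∀ (n : ℕ), 2 ≤ n → ∀ x : ℤ × ℤ, 0 < znorm x → znorm x < n →
          (Real.logb 2 n - Real.logb 2 (znorm x) - C) / Real.logb 2 n ≤
              (μ {ω | walkFrom X x (hitTime X x n ω) ω = 0}).toReal ∧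
            (μ {ω | walkFrom X x (hitTime X x n ω) ω = 0}).toReal ≤
              (Real.logb 2 n - Real.logb 2 (znorm x) + C) / Real.logb 2 n := by
  refine ⟨12, by norm_num, ?_⟩
  intro Ω _ μ _ X hX hmap hind n hn x hx0 hxn
  have hx : x ∈ puncturedBall n := mem_puncturedBall_iff.2 ⟨hx0, hxn⟩
  have hs : (1 : ℝ) ≤ sqNorm x := by exact_mod_cast one_le_sqNorm hx.1
  have hL : 0 < Real.log n := Real.log_pos (by exact_mod_cast hn)
  obtain ⟨hlo, hup⟩ := hitProb_between_barriers hn (hitProb_le_one hX hmap hind n) hx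
  rw [barrier_of_ne_zero _ _ _ (by positivity), logPot] at hlo hup
  rw [neg_div] at hlo
  rw [measure_hit_eq_hitProb hX hmap hind hx, sub_eq_add_neg _ (12 : ℝ), logb_ratio_eq hn,
    logb_ratio_eq hn]
  have hlog2 := Real.log_two_gt_d9
  constructor
  · refine le_trans (div_le_div_of_nonneg_right ?_ (by positivity)) hlo
    have : 0 ≤ 3 / (sqNorm x : ℝ) := by positivity
    linarith
  · refine hup.trans (div_le_div_of_nonneg_right ?_ (by positivity))
    have : 0 ≤ 4 / (sqNorm x : ℝ) := by positivity
    linarith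
end

section
/- There exists a constant C > 0 such that for every integer k ≥ 2 and every x ∈ A_{k−1}, simple random walk (S_j)_{j≥0} on ℤ² started at x satisfies P(S_{s_k − s_{k−1}} ∉ A_k) ≤ C/k^10. -/
open MeasureTheory ProbabilityTheory

/-- The scales `s_0 = 1`, `s_k = k^10 · 2^(2k²)` for `k ≥ 1`. -/
def sc (k : ℕ) : ℕ := if k = 0 then 1 else k ^ 10 * 2 ^ (2 * k ^ 2)

/-- The annulus `A_k = {x ∈ ℤ² : 2^(k²) ≤ |x| ≤ k^10 · 2^(k²)}`. -/
def annulus (k : ℕ) : Set (ℤ × ℤ) :=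
  {x | (2 : ℝ) ^ (k ^ 2) ≤ znorm x ∧ znorm x ≤ (k : ℝ) ^ 10 * 2 ^ (k ^ 2)}

/-!
Let `n = s_k - s_{k-1}` and let `S` be the displacement of the walk after `n` steps. Since
`64 s_{k-1} ≤ s_k`, we have `n ≤ s_k ≤ 2 (n + 1)`. If `x + S ∉ A_k`, then either
`|x + S| < 2^{k²}` or `|x + S| > k^10 2^{k²}`.

In the second case, as `|x|² ≤ k^20 4^{k²} / 64`, the parallelogram inequality forces
`|S|² > k^20 4^{k²} / 4`, and Chebyshev's inequality with `E|S|² = n ≤ s_k` bounds the probability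
by `4 / k^10`.

In the first case `x + S` lies in a box of at most `9 · 4^{k²}` lattice points, and the local
bound `P(S = y) ≤ C(n, ⌊n/2⌋)² / 4^n ≤ 2 / (n + 1)` bounds the probability by `36 / k^10`. The
local bound holds because the rotation `(a, b) ↦ (a + b, a - b)` turns the walk into a pair of
independent simple random walks on `ℤ`.

Every probability is computed as the number of step sequences realising the event, divided
by `4^n`.
-/

namespace SRW

open Finset

def steps : Finset (ℤ × ℤ) := {(1, 0), (-1, 0), (0, 1), (0, -1)}

lemma card_steps : #steps = 4 := rfl

abbrev paths (n : ℕ) : Finset (Fin n → ℤ × ℤ) := Fintype.piFinset fun _ ↦ steps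

open Classical in
noncomputable def numPaths (n : ℕ) (s : Set (ℤ × ℤ)) : ℕ := #{v ∈ paths n | ∑ j, v j ∈ s}

def normSq (p : ℤ × ℤ) : ℤ := p.1 ^ 2 + p.2 ^ 2

lemma normSq_nonneg (p : ℤ × ℤ) : 0 ≤ normSq p := by unfold normSq; positivity

lemma normSq_add_le (x p : ℤ × ℤ) : normSq (x + p) ≤ 2 * normSq x + 2 * normSq p := by
  simp only [normSq, Prod.fst_add, Prod.snd_add]
  nlinarith [sq_nonneg (x.1 - p.1), sq_nonneg (x.2 - p.2)]

lemma four_pow_eq_sq_two_pow {R : Type*} [Semiring R] (a : ℕ) : (4 : R) ^ a = (2 ^ a) ^ 2 := by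
  rw [← pow_mul, mul_comm, pow_mul]; norm_num

section Law

lemma stepDist_apply (s : Set (ℤ × ℤ)) :
    stepDist s = 4⁻¹ * ∑ a ∈ steps, s.indicator 1 a := by
  simp [stepDist, steps, Measure.add_apply,
    Measure.dirac_apply' _ (Set.to_countable s).measurableSet, mul_add, add_assoc]

instance isProbabilityMeasure_stepDist : IsProbabilityMeasure stepDist :=
  ⟨by rw [stepDist_apply]; simp [steps, ENNReal.inv_mul_cancel]⟩

lemma stepDist_singleton {a : ℤ × ℤ} (ha : a ∈ steps) : stepDist {a} = 4⁻¹ := by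
  rw [stepDist_apply]
  fin_cases ha <;> simp [steps, Set.indicator_apply]

lemma stepDist_compl_steps : stepDist (steps : Set (ℤ × ℤ))ᶜ = 0 := by
  simp [stepDist_apply]

lemma pi_stepDist_apply (n : ℕ) (S : Set (Fin n → ℤ × ℤ)) [DecidablePred (· ∈ S)] :
    Measure.pi (fun _ ↦ stepDist) S = #{v ∈ paths n | v ∈ S} * 4⁻¹ ^ n := by
  have hnull : Measure.pi (fun _ ↦ stepDist) (paths n : Set (Fin n → ℤ × ℤ))ᶜ = 0 := by
    refine measure_mono_null (t := ⋃ j, Function.eval j ⁻¹' (steps : Set (ℤ × ℤ))ᶜ) ?_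
      (measure_iUnion_null fun j ↦ Measure.pi_eval_preimage_null _ stepDist_compl_steps)
    intro v hv
    simpa using hv
  have hS : S ∩ paths n = ↑({v ∈ paths n | v ∈ S}) := by ext; simp [and_comm]
  rw [← measure_inter_conull hnull, hS, ← sum_measure_singleton, sum_congr rfl fun v hv ↦ ?_,
    sum_const, nsmul_eq_mul]
  rw [Measure.pi_singleton, prod_congr rfl fun j _ ↦ stepDist_singleton ?_, prod_const,
    card_univ, Fintype.card_fin]
  exact Fintype.mem_piFinset.1 (mem_filter.1 hv).1 j

lemma walkFrom_eq {Ω : Type} (X : ℕ → Ω → ℤ × ℤ) (x : ℤ × ℤ) (n : ℕ) (ω : Ω) :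
    walkFrom X x n ω = x + ∑ j : Fin n, X (j + 1) ω := by
  rw [walkFrom, ← Ico_add_one_right_eq_Icc, sum_Ico_eq_sum_range,
    Fin.sum_univ_eq_sum_range (fun i ↦ X (i + 1) ω)]
  simp only [add_tsub_cancel_right, add_comm 1]

variable {Ω : Type} [MeasurableSpace Ω] {μ : Measure Ω} {X : ℕ → Ω → ℤ × ℤ}

lemma map_steps_eq_pi (hX : ∀ i, Measurable (X i)) (hlaw : ∀ i, μ.map (X i) = stepDist)
    (hindep : iIndepFun X μ) (n : ℕ) :
    μ.map (fun ω (j : Fin n) ↦ X (j + 1) ω) = Measure.pi fun _ ↦ stepDist := by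
  rw [(hindep.precomp (g := fun j : Fin n ↦ (j : ℕ) + 1)
    fun i j h ↦ by simpa [Fin.ext_iff] using h).map_fun_eq_pi_map fun j ↦ (hX _).aemeasurable]
  simp [hlaw]

lemma measure_walkFrom_mem (hX : ∀ i, Measurable (X i)) (hlaw : ∀ i, μ.map (X i) = stepDist)
    (hindep : iIndepFun X μ) (x : ℤ × ℤ) (n : ℕ) (B : Set (ℤ × ℤ)) :
    μ {ω | walkFrom X x n ω ∈ B} = numPaths n {p | x + p ∈ B} * 4⁻¹ ^ n := by
  classical
  have hY : Measurable fun ω (j : Fin n) ↦ X (j + 1) ω := measurable_pi_lambda _ fun j ↦ hX _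
  have hpre : {ω | walkFrom X x n ω ∈ B} =
      (fun ω (j : Fin n) ↦ X (j + 1) ω) ⁻¹' {v | x + ∑ j, v j ∈ B} := by
    ext; simp [walkFrom_eq]
  rw [hpre, ← Measure.map_apply hY (Set.to_countable _).measurableSet,
    map_steps_eq_pi hX hlaw hindep, pi_stepDist_apply, numPaths]
  congr

end Law

lemma numPaths_mono {n : ℕ} {s t : Set (ℤ × ℤ)} (h : s ⊆ t) : numPaths n s ≤ numPaths n t := by
  unfold numPaths
  exact card_le_card fun v ↦ by simpa using fun hv hs ↦ ⟨hv, h hs⟩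

lemma numPaths_union_le (n : ℕ) (s t : Set (ℤ × ℤ)) :
    numPaths n (s ∪ t) ≤ numPaths n s + numPaths n t := by
  unfold numPaths
  refine (card_le_card fun v ↦ ?_).trans (card_union_le _ _)
  simp only [mem_filter, mem_union, Set.mem_union]
  tauto

lemma numPaths_le_sum_singleton (n : ℕ) (E : Finset (ℤ × ℤ)) :
    numPaths n E ≤ ∑ y ∈ E, numPaths n {y} := by
  classical
  induction E using Finset.induction_on with
  | empty => simp [numPaths]
  | insert a E ha ih =>
    rw [coe_insert, Set.insert_eq, sum_insert ha]
    exact (numPaths_union_le n _ _).trans (Nat.add_le_add_left ih _)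

lemma sum_paths_succ {M : Type*} [AddCommMonoid M] (n : ℕ) (f : (Fin (n + 1) → ℤ × ℤ) → M) :
    ∑ v ∈ paths (n + 1), f v = ∑ a ∈ steps, ∑ w ∈ paths n, f (Fin.cons a w) := by
  have := filter_piFinset_eq_map_consEquiv (fun _ : Fin (n + 1) ↦ steps) (fun _ ↦ True)
  simp only [filter_true] at this
  rw [paths, this, sum_map, sum_product]
  rfl

lemma sum_steps_normSq_add (y : ℤ × ℤ) : ∑ a ∈ steps, normSq (y + a) = 4 * normSq y + 4 := by
  rw [steps, sum_insert (by decide), sum_insert (by decide), sum_insert (by decide),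
    sum_singleton]
  simp only [normSq, Prod.fst_add, Prod.snd_add]
  ring

lemma sum_paths_normSq (n : ℕ) (x : ℤ × ℤ) :
    ∑ v ∈ paths n, normSq (x + ∑ j, v j) = 4 ^ n * (normSq x + n) := by
  induction n generalizing x with
  | zero => simp
  | succ n ih =>
    simp_rw [sum_paths_succ, Fin.sum_cons, ← add_assoc, ih, ← mul_sum, sum_add_distrib,
      sum_steps_normSq_add]
    rw [sum_const, card_steps, nsmul_eq_mul]
    push_cast
    ring

lemma numPaths_lt_normSq_mul_le (n : ℕ) (R : ℤ) :
    numPaths n {p | R < normSq p} * R ≤ 4 ^ n * n := by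
  classical
  calc (numPaths n {p | R < normSq p} : ℤ) * R
      = ∑ v ∈ paths n with R < normSq (∑ j, v j), R := by
        rw [sum_const, nsmul_eq_mul, numPaths]; congr
    _ ≤ ∑ v ∈ paths n with R < normSq (∑ j, v j), normSq (∑ j, v j) :=
        sum_le_sum fun v hv ↦ (mem_filter.1 hv).2.le
    _ ≤ ∑ v ∈ paths n, normSq (0 + ∑ j, v j) := by
        simp only [zero_add]
        exact sum_le_sum_of_subset_of_nonneg (filter_subset _ _) fun v _ _ ↦ normSq_nonneg _
    _ = 4 ^ n * n := by rw [sum_paths_normSq]; simp [normSq]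

abbrev signs (n : ℕ) : Finset (Fin n → ℤ) := Fintype.piFinset fun _ ↦ {1, -1}

lemma sum_eq_of_mem_signs {n : ℕ} {u : Fin n → ℤ} (hu : u ∈ signs n) :
    ∑ j, u j = 2 * #{j | u j = 1} - n := by
  have hu' : ∀ j, u j = 2 * (if u j = 1 then 1 else 0) - 1 := fun j ↦ by
    rcases mem_insert.1 (Fintype.mem_piFinset.1 hu j) with h | h <;> simp_all
  rw [sum_congr rfl fun j _ ↦ hu' j, sum_sub_distrib, ← mul_sum, sum_boole]
  simp

lemma card_signs_sum_eq_le (n : ℕ) (c : ℤ) :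
    #{u ∈ signs n | ∑ j, u j = c} ≤ n.choose (n / 2) := by
  obtain h | ⟨u₀, hu₀⟩ := eq_empty_or_nonempty {u ∈ signs n | ∑ j, u j = c}
  · simp [h]
  rw [mem_filter] at hu₀
  set m := #{j | u₀ j = 1}
  calc #{u ∈ signs n | ∑ j, u j = c} ≤ #(powersetCard m (univ : Finset (Fin n))) := by
        refine card_le_card_of_injOn (fun u ↦ univ.filter (u · = 1)) (fun u hu ↦ ?_)
          fun u hu v hv huv ↦ ?_
        · rw [mem_coe, mem_filter] at hu
          rw [mem_coe, mem_powersetCard]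
          have := sum_eq_of_mem_signs hu.1
          have := sum_eq_of_mem_signs hu₀.1
          exact ⟨subset_univ _, by dsimp only at *; omega⟩
        · rw [mem_coe, mem_filter] at hu hv
          funext j
          have hj := congrArg (j ∈ ·) huv
          simp only [mem_filter, mem_univ, true_and, eq_iff_iff] at hj
          rcases mem_insert.1 (Fintype.mem_piFinset.1 hu.1 j) with h | h <;>
          rcases mem_insert.1 (Fintype.mem_piFinset.1 hv.1 j) with h' | h' <;> simp_all
    _ ≤ n.choose (n / 2) := by simpa using Nat.choose_le_middle m n

lemma rotate_mem_of_mem_steps {a : ℤ × ℤ} (ha : a ∈ steps) :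
    a.1 + a.2 ∈ ({1, -1} : Finset ℤ) ∧ a.1 - a.2 ∈ ({1, -1} : Finset ℤ) := by
  fin_cases ha <;> decide

lemma numPaths_singleton_le (n : ℕ) (y : ℤ × ℤ) : numPaths n {y} ≤ n.choose (n / 2) ^ 2 := by
  classical
  calc numPaths n {y}
      ≤ #({u ∈ signs n | ∑ j, u j = y.1 + y.2} ×ˢ {u ∈ signs n | ∑ j, u j = y.1 - y.2}) := by
        refine card_le_card_of_injOn
          (fun v ↦ (fun j ↦ (v j).1 + (v j).2, fun j ↦ (v j).1 - (v j).2))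
          (fun v hv ↦ ?_) fun v _ w _ hvw ↦ ?_
        · simp only [coe_filter, Set.mem_ofPred_eq, Set.mem_singleton_iff] at hv
          simp only [coe_product, coe_filter, Set.mem_prod, Set.mem_ofPred_eq,
            Fintype.mem_piFinset]
          refine ⟨⟨fun j ↦ (rotate_mem_of_mem_steps (Fintype.mem_piFinset.1 hv.1 j)).1, ?_⟩,
            fun j ↦ (rotate_mem_of_mem_steps (Fintype.mem_piFinset.1 hv.1 j)).2, ?_⟩
          · rw [sum_add_distrib, ← Prod.fst_sum, ← Prod.snd_sum, hv.2]
          · rw [sum_sub_distrib, ← Prod.fst_sum, ← Prod.snd_sum, hv.2]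
        · simp only [Prod.mk.injEq, funext_iff] at hvw
          funext j
          have := hvw.1 j
          have := hvw.2 j
          ext <;> omega
    _ ≤ n.choose (n / 2) ^ 2 := by
        rw [card_product, sq]
        exact Nat.mul_le_mul (card_signs_sum_eq_le n _) (card_signs_sum_eq_le n _)

lemma three_mul_add_one_mul_centralBinom_sq_le (m : ℕ) :
    (3 * m + 1) * m.centralBinom ^ 2 ≤ 16 ^ m := by
  induction m with
  | zero => simp
  | succ m ih =>
    refine Nat.le_of_mul_le_mul_left ?_ (by positivity : 0 < (m + 1) ^ 2)
    calc (m + 1) ^ 2 * ((3 * (m + 1) + 1) * (m + 1).centralBinom ^ 2)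
        = (3 * m + 4) * ((m + 1) * (m + 1).centralBinom) ^ 2 := by ring
      _ = (3 * m + 4) * 4 * (2 * m + 1) ^ 2 * m.centralBinom ^ 2 := by
        rw [Nat.succ_mul_centralBinom_succ]; ring
      _ ≤ 16 * (m + 1) ^ 2 * (3 * m + 1) * m.centralBinom ^ 2 :=
        Nat.mul_le_mul_right _ (by nlinarith)
      _ = (m + 1) ^ 2 * 16 * ((3 * m + 1) * m.centralBinom ^ 2) := by ring
      _ ≤ (m + 1) ^ 2 * 16 * 16 ^ m := Nat.mul_le_mul_left _ ih
      _ = (m + 1) ^ 2 * 16 ^ (m + 1) := by ring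

lemma two_mul_choose_eq_centralBinom_succ (m : ℕ) :
    2 * (2 * m + 1).choose m = (m + 1).centralBinom := by
  rw [Nat.centralBinom, show 2 * (m + 1) = 2 * m + 1 + 1 by ring, Nat.choose_succ_succ,
    ← Nat.choose_symm_half]
  ring

lemma succ_mul_choose_half_sq_le (n : ℕ) : (n + 1) * n.choose (n / 2) ^ 2 ≤ 2 * 4 ^ n := by
  obtain ⟨m, rfl | rfl⟩ := Nat.even_or_odd' n
  · rw [Nat.mul_div_cancel_left m two_pos, ← Nat.centralBinom_eq_two_mul_choose, pow_mul]
    calc (2 * m + 1) * m.centralBinom ^ 2 ≤ (3 * m + 1) * m.centralBinom ^ 2 :=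
          Nat.mul_le_mul_right _ (by omega)
      _ ≤ 16 ^ m := three_mul_add_one_mul_centralBinom_sq_le m
      _ ≤ 2 * (4 ^ 2) ^ m := by norm_num
  · have := three_mul_add_one_mul_centralBinom_sq_le (m + 1)
    rw [← two_mul_choose_eq_centralBinom_succ, pow_succ 16] at this
    rw [show (2 * m + 1) / 2 = m by omega, pow_succ 4, pow_mul]
    norm_num
    nlinarith [Nat.zero_le ((2 * m + 1).choose m ^ 2)]

lemma succ_mul_numPaths_le {n : ℕ} {s : Set (ℤ × ℤ)} {E : Finset (ℤ × ℤ)} (hs : s ⊆ E) :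
    (n + 1) * numPaths n s ≤ #E * (2 * 4 ^ n) :=
  calc (n + 1) * numPaths n s ≤ (n + 1) * ∑ y ∈ E, numPaths n {y} :=
        Nat.mul_le_mul_left _ ((numPaths_mono hs).trans (numPaths_le_sum_singleton n E))
    _ = ∑ y ∈ E, (n + 1) * numPaths n {y} := mul_sum _ _ _
    _ ≤ ∑ _y ∈ E, 2 * 4 ^ n := sum_le_sum fun y _ ↦
        (Nat.mul_le_mul_left _ (numPaths_singleton_le n y)).trans (succ_mul_choose_half_sq_le n)
    _ = #E * (2 * 4 ^ n) := by rw [sum_const, smul_eq_mul]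

lemma succ_mul_numPaths_normSq_add_lt_le (n : ℕ) (x : ℤ × ℤ) (L : ℕ) :
    (n + 1) * numPaths n {p | normSq (x + p) < L ^ 2} ≤ (2 * L + 1) ^ 2 * (2 * 4 ^ n) := by
  have hbox : {p | normSq (x + p) < L ^ 2} ⊆
      ↑(Icc (-L - x.1) (L - x.1) ×ˢ Icc (-(L : ℤ) - x.2) (L - x.2)) := by
    intro p hp
    simp only [Set.mem_ofPred_eq, normSq, Prod.fst_add, Prod.snd_add] at hp
    have h1 : |x.1 + p.1| < L :=
      abs_lt_of_sq_lt_sq (by nlinarith [sq_nonneg (x.2 + p.2)]) (by positivity)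
    have h2 : |x.2 + p.2| < L :=
      abs_lt_of_sq_lt_sq (by nlinarith [sq_nonneg (x.1 + p.1)]) (by positivity)
    rw [abs_lt] at h1 h2
    simp only [coe_product, coe_Icc, Set.mem_prod, Set.mem_Icc]
    omega
  refine (succ_mul_numPaths_le hbox).trans_eq ?_
  rw [card_product, Int.card_Icc, Int.card_Icc, sq]
  congr 2 <;> omega

lemma mem_annulus_iff {k : ℕ} {x : ℤ × ℤ} :
    x ∈ annulus k ↔ 4 ^ k ^ 2 ≤ normSq x ∧ normSq x ≤ (k : ℤ) ^ 20 * 4 ^ k ^ 2 := by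
  have hz : znorm x = √(normSq x : ℝ) := by simp [znorm, normSq]
  have hhi : ((k : ℝ) ^ 10 * 2 ^ k ^ 2) ^ 2 = k ^ 20 * 4 ^ k ^ 2 := by
    rw [four_pow_eq_sq_two_pow]; ring
  rw [annulus, Set.mem_ofPred_eq, hz, Real.le_sqrt' (by positivity),
    Real.sqrt_le_left (by positivity), ← four_pow_eq_sq_two_pow, hhi]
  norm_cast

lemma sc_eq {k : ℕ} (hk : k ≠ 0) : sc k = k ^ 10 * 4 ^ k ^ 2 := by
  rw [sc, if_neg hk, pow_mul]; norm_num

lemma sixtyFour_mul_pred_le (m : ℕ) {k : ℕ} (hk : 2 ≤ k) :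
    64 * ((k - 1) ^ m * 4 ^ (k - 1) ^ 2) ≤ k ^ m * 4 ^ k ^ 2 := by
  have hexp : (k - 1) ^ 2 + 3 ≤ k ^ 2 := by
    obtain ⟨j, rfl⟩ := Nat.exists_eq_add_of_le hk
    rw [show 2 + j - 1 = j + 1 by omega]
    nlinarith
  calc 64 * ((k - 1) ^ m * 4 ^ (k - 1) ^ 2) = (k - 1) ^ m * 4 ^ ((k - 1) ^ 2 + 3) := by ring
    _ ≤ k ^ m * 4 ^ k ^ 2 := Nat.mul_le_mul (Nat.pow_le_pow_left (Nat.sub_le k 1) m)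
        (Nat.pow_le_pow_right (by norm_num) hexp)

lemma numPaths_far_mul_le {k n : ℕ} (hk : 2 ≤ k) {x : ℤ × ℤ} (hx : x ∈ annulus (k - 1))
    (hn : n ≤ k ^ 10 * 4 ^ k ^ 2) :
    numPaths n {p | (k : ℤ) ^ 20 * 4 ^ k ^ 2 < normSq (x + p)} * k ^ 10 ≤ 4 * 4 ^ n := by
  obtain ⟨K, hK⟩ : ∃ K, k ^ 2 = K + 1 := Nat.exists_eq_add_one.2 (by positivity)
  set R : ℤ := k ^ 20 * 4 ^ K
  have h4R : (k : ℤ) ^ 20 * 4 ^ k ^ 2 = 4 * R := by rw [hK]; ring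
  have hx64 : 64 * normSq x ≤ 4 * R := by
    have hpred : (64 * ((k - 1 : ℕ) ^ 20 * 4 ^ (k - 1) ^ 2) : ℤ) ≤ k ^ 20 * 4 ^ k ^ 2 := by
      exact_mod_cast sixtyFour_mul_pred_le 20 hk
    linarith [(mem_annulus_iff.1 hx).2]
  have hfar : {p | (k : ℤ) ^ 20 * 4 ^ k ^ 2 < normSq (x + p)} ⊆ {p | R < normSq p} := by
    intro p (hp : (k : ℤ) ^ 20 * 4 ^ k ^ 2 < normSq (x + p))
    rw [h4R] at hp
    show R < normSq p
    linarith [normSq_add_le x p, (by positivity : 0 ≤ R)]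
  have hmarkov := (mul_le_mul_of_nonneg_right (Int.ofNat_le.2 (numPaths_mono hfar (n := n)))
    (by positivity : 0 ≤ R)).trans (numPaths_lt_normSq_mul_le n R)
  refine Int.ofNat_le.1 (le_of_mul_le_mul_right ?_ (by positivity : (0 : ℤ) < k ^ 10 * 4 ^ K))
  calc _ = ((numPaths n {p | (k : ℤ) ^ 20 * 4 ^ k ^ 2 < normSq (x + p)} : ℤ) * R) := by
        push_cast; ring
    _ ≤ 4 ^ n * n := hmarkov
    _ ≤ 4 ^ n * (k ^ 10 * 4 ^ k ^ 2) := by gcongr; exact_mod_cast hn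
    _ = _ := by rw [hK]; push_cast; ring

lemma numPaths_near_mul_le {k n : ℕ} (x : ℤ × ℤ) (hn : k ^ 10 * 4 ^ k ^ 2 ≤ 2 * (n + 1)) :
    numPaths n {p | normSq (x + p) < 4 ^ k ^ 2} * k ^ 10 ≤ 36 * 4 ^ n := by
  have h := succ_mul_numPaths_normSq_add_lt_le n x (2 ^ k ^ 2)
  rw [Nat.cast_pow, Nat.cast_ofNat, ← four_pow_eq_sq_two_pow] at h
  have hbox : (2 * 2 ^ k ^ 2 + 1) ^ 2 ≤ 9 * 4 ^ k ^ 2 := by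
    rw [four_pow_eq_sq_two_pow]
    nlinarith [Nat.one_le_two_pow (n := k ^ 2)]
  refine Nat.le_of_mul_le_mul_right ?_ (by positivity : 0 < 4 ^ k ^ 2)
  calc numPaths n {p | normSq (x + p) < 4 ^ k ^ 2} * k ^ 10 * 4 ^ k ^ 2
      ≤ 2 * ((n + 1) * numPaths n {p | normSq (x + p) < 4 ^ k ^ 2}) := by
        rw [mul_assoc]; nlinarith
    _ ≤ 2 * (9 * 4 ^ k ^ 2 * (2 * 4 ^ n)) :=
        Nat.mul_le_mul_left _ (h.trans (Nat.mul_le_mul_right _ hbox))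
    _ = 36 * 4 ^ n * 4 ^ k ^ 2 := by ring

lemma numPaths_compl_annulus_mul_le {k : ℕ} (hk : 2 ≤ k) {x : ℤ × ℤ}
    (hx : x ∈ annulus (k - 1)) :
    numPaths (sc k - sc (k - 1)) {p | x + p ∉ annulus k} * k ^ 10 ≤
      40 * 4 ^ (sc k - sc (k - 1)) := by
  have hsc : 64 * sc (k - 1) ≤ sc k := by
    rw [sc_eq (by omega), sc_eq (by omega)]; exact sixtyFour_mul_pred_le 10 hk
  have hsplit : {p | x + p ∉ annulus k} ⊆
      {p | normSq (x + p) < 4 ^ k ^ 2} ∪ {p | (k : ℤ) ^ 20 * 4 ^ k ^ 2 < normSq (x + p)} := by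
    intro p hp
    simpa only [Set.mem_union, Set.mem_ofPred_eq, mem_annulus_iff, not_and_or, not_le] using hp
  calc _ ≤ (numPaths _ {p | normSq (x + p) < 4 ^ k ^ 2} +
        numPaths _ {p | (k : ℤ) ^ 20 * 4 ^ k ^ 2 < normSq (x + p)}) * k ^ 10 :=
        Nat.mul_le_mul_right _ ((numPaths_mono hsplit).trans (numPaths_union_le _ _ _))
    _ ≤ 36 * 4 ^ (sc k - sc (k - 1)) + 4 * 4 ^ (sc k - sc (k - 1)) := by
        rw [add_mul]
        exact add_le_add (numPaths_near_mul_le x (by rw [← sc_eq (by omega)]; omega))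
          (numPaths_far_mul_le hk hx (by rw [← sc_eq (by omega)]; omega))
    _ = _ := by ring

end SRW

/-- There is a constant `C > 0` such that for every `k ≥ 2` and every `x ∈ A_{k−1}`,
simple random walk on `ℤ²` started at `x` satisfies
`P(S_{s_k − s_{k−1}} ∉ A_k) ≤ C / k^10`. -/
theorem stmt7 :
    ∃ C : ℝ, 0 < C ∧
      ∀ (Ω : Type) [MeasurableSpace Ω] (μ : Measure Ω) [IsProbabilityMeasure μ]
        (X : ℕ → Ω → ℤ × ℤ),
        (∀ i, Measurable (X i)) →
        (∀ i, μ.map (X i) = stepDist) →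
        iIndepFun X μ →
        ∀ (k : ℕ), 2 ≤ k → ∀ x ∈ annulus (k - 1),
          (μ {ω | walkFrom X x (sc k - sc (k - 1)) ω ∉ annulus k}).toReal ≤
            C / k ^ 10 := by
  refine ⟨40, by norm_num, fun Ω _ μ _ X hX hlaw hindep k hk x hx ↦ ?_⟩
  have hcount : (SRW.numPaths (sc k - sc (k - 1)) {p | x + p ∉ annulus k} : ℝ) * k ^ 10 ≤
      40 * 4 ^ (sc k - sc (k - 1)) := by
    exact_mod_cast SRW.numPaths_compl_annulus_mul_le hk hx
  simp_rw [← Set.mem_compl_iff, SRW.measure_walkFrom_mem hX hlaw hindep, ENNReal.toReal_mul,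
    ENNReal.toReal_pow, ENNReal.toReal_inv, ENNReal.toReal_natCast, ENNReal.toReal_ofNat]
  rw [le_div_iff₀ (by positivity), inv_pow, mul_right_comm, ← div_eq_mul_inv,
    div_le_iff₀ (by positivity)]
  exact hcount
end
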